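/- arXiv:1911.10832 — 4 statements merged into one kernel-verified Lean document; each statement's English description precedes it below -/
import Mathlib

section
/- Under the affine transformation x^{(i)} = A u^{(i)} + b with A invertible, the localised covariance matrices with weights defined via the metric D = P_0^{xx} (the empirical covariance at initial time, transforming as D_x = A D_u A^T) satisfy P^{xx}(x^{(i)}) = A P^{uu}(u^{(i)}) A^T, because the localisation weights w^{ij} ∝ exp(−(1/2γ)‖x^{(i)} − x^{(j)}‖²_{D_x}) are invariant: ‖x^{(i)} − x^{(j)}‖²_{D_x} = ‖u^{(i)} − u^{(j)}‖²_{D_u}. -/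
open Matrix BigOperators Real

lemma aux_mulVec_sum {n : ℕ} {ι : Type*} (s : Finset ι) (A : Matrix (Fin n) (Fin n) ℝ)
    (f : ι → Fin n → ℝ) : A *ᵥ (∑ j ∈ s, f j) = ∑ j ∈ s, A *ᵥ f j := by
  ext k
  simp [Matrix.mulVec, dotProduct, Finset.mul_sum]
  exact Finset.sum_comm

lemma aux_vecMulVec_mul (n : ℕ) (A : Matrix (Fin n) (Fin n) ℝ) (v : Fin n → ℝ) :
    vecMulVec (A *ᵥ v) (A *ᵥ v) = A * vecMulVec v v * Aᵀ := by
  ext i j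
  simp only [vecMulVec_apply, Matrix.mul_apply, mulVec, dotProduct, vecMulVec_apply,
    transpose_apply]
  rw [Finset.sum_mul_sum]
  rw [Finset.sum_comm]
  congr 1; ext k
  rw [Finset.sum_mul]
  congr 1; ext l
  ring

/-- Under the affine transformation `xᵢ = A uᵢ + b` with `A` invertible and
metrics `D_x = A D_u Aᵀ`, the localisation weights are invariant (since
`‖xᵢ - xⱼ‖²_{D_x} = ‖uᵢ - uⱼ‖²_{D_u}`) and the localised covariance matrices satisfy
`Pˣˣ(xᵢ) = A Pᵘᵘ(uᵢ) Aᵀ`. -/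
theorem localised_covariance_affine_invariance (n M : ℕ) (γ : ℝ) (hγ : 0 < γ)
    (A Du : Matrix (Fin n) (Fin n) ℝ) (hA : IsUnit A) (hDu : Du.PosDef)
    (Dx : Matrix (Fin n) (Fin n) ℝ) (hDx : Dx = A * Du * Aᵀ)
    (b : Fin n → ℝ) (x u : Fin M → (Fin n → ℝ)) (hxu : ∀ i, x i = A *ᵥ u i + b) :
    let qx : (Fin n → ℝ) → ℝ := fun v => v ⬝ᵥ Dx⁻¹ *ᵥ v
    let qu : (Fin n → ℝ) → ℝ := fun v => v ⬝ᵥ Du⁻¹ *ᵥ v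
    let wx : Fin M → Fin M → ℝ := fun i j =>
      exp (-(1 / (2 * γ)) * qx (x i - x j)) / ∑ l, exp (-(1 / (2 * γ)) * qx (x i - x l))
    let wu : Fin M → Fin M → ℝ := fun i j =>
      exp (-(1 / (2 * γ)) * qu (u i - u j)) / ∑ l, exp (-(1 / (2 * γ)) * qu (u i - u l))
    let xbar : Fin M → (Fin n → ℝ) := fun i => ∑ j, wx i j • x j
    let ubar : Fin M → (Fin n → ℝ) := fun i => ∑ j, wu i j • u j
    let Pxx : Fin M → Matrix (Fin n) (Fin n) ℝ := fun i =>
      ∑ j, wx i j • vecMulVec (x j - xbar i) (x j - xbar i)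
    let Puu : Fin M → Matrix (Fin n) (Fin n) ℝ := fun i =>
      ∑ j, wu i j • vecMulVec (u j - ubar i) (u j - ubar i)
    (∀ i j, qx (x i - x j) = qu (u i - u j)) ∧
    (∀ i j, wx i j = wu i j) ∧
    (∀ i, Pxx i = A * Puu i * Aᵀ) := by
  intro qx qu wx wu xbar ubar Pxx Puu
  have hAdet : IsUnit A.det := (Matrix.isUnit_iff_isUnit_det A).mp hA
  have hATdet : IsUnit Aᵀ.det := by rwa [Matrix.det_transpose]
  have hDudet : IsUnit Du.det := isUnit_iff_ne_zero.mpr hDu.det_pos.ne'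
  -- key quadratic form invariance
  have hq : ∀ v : Fin n → ℝ, qx (A *ᵥ v) = qu v := by
    intro v
    have hinv : Dx⁻¹ = Aᵀ⁻¹ * Du⁻¹ * A⁻¹ := by
      rw [hDx, Matrix.mul_inv_rev, Matrix.mul_inv_rev]
      rw [Matrix.mul_assoc]
    show (A *ᵥ v) ⬝ᵥ Dx⁻¹ *ᵥ (A *ᵥ v) = v ⬝ᵥ Du⁻¹ *ᵥ v
    rw [hinv, Matrix.mulVec_mulVec, Matrix.mul_assoc, Matrix.nonsing_inv_mul A hAdet,
      Matrix.mul_one]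
    rw [← Matrix.mulVec_mulVec]
    rw [Matrix.dotProduct_mulVec (A *ᵥ v) Aᵀ⁻¹]
    rw [show Matrix.vecMul (A *ᵥ v) Aᵀ⁻¹ = v by
      rw [show A *ᵥ v = Matrix.vecMul v Aᵀ from by
        rw [← Matrix.mulVec_transpose, Matrix.transpose_transpose]]
      rw [Matrix.vecMul_vecMul, Matrix.mul_nonsing_inv Aᵀ hATdet, Matrix.vecMul_one]]
  have hdiff : ∀ i j, x i - x j = A *ᵥ (u i - u j) := by
    intro i j
    rw [hxu i, hxu j, Matrix.mulVec_sub]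
    abel
  have h1 : ∀ i j, qx (x i - x j) = qu (u i - u j) := by
    intro i j; rw [hdiff, hq]
  have h2 : ∀ i j, wx i j = wu i j := by
    intro i j
    show _ / _ = _ / _
    simp only [h1]
  have hwsum : ∀ i, ∑ j, wu i j = 1 := by
    intro i
    have hpos : 0 < ∑ l, exp (-(1 / (2 * γ)) * qu (u i - u l)) :=
      Finset.sum_pos (fun l _ => Real.exp_pos _) ⟨i, Finset.mem_univ i⟩
    show (∑ j, _ / _) = 1
    rw [← Finset.sum_div, div_self hpos.ne']
  have hbar : ∀ i, xbar i = A *ᵥ ubar i + b := by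
    intro i
    show (∑ j, wx i j • x j) = A *ᵥ (∑ j, wu i j • u j) + b
    rw [aux_mulVec_sum]
    have : ∀ j : Fin M, wx i j • x j = A *ᵥ (wu i j • u j) + wu i j • b := by
      intro j
      rw [h2, hxu j, smul_add, Matrix.mulVec_smul]
    simp only [this]
    rw [Finset.sum_add_distrib]
    congr 1
    rw [← Finset.sum_smul, hwsum, one_smul]
  have hdiff2 : ∀ i j, x j - xbar i = A *ᵥ (u j - ubar i) := by
    intro i j
    rw [hxu j, hbar i, Matrix.mulVec_sub]
    abel
  refine ⟨h1, h2, fun i => ?_⟩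
  show (∑ j, wx i j • vecMulVec (x j - xbar i) (x j - xbar i))
      = A * (∑ j, wu i j • vecMulVec (u j - ubar i) (u j - ubar i)) * Aᵀ
  rw [Finset.mul_sum, Finset.sum_mul]
  congr 1; ext j
  rw [h2, hdiff2, aux_vecMulVec_mul, mul_smul_comm, smul_mul_assoc]
end

section
/- Under the same particle dynamics dX^{(i)}/dt = −(P*)^{-1}(X^{(i)} − x*) + (P^{xx})^{-1}(X^{(i)} − X̄), the empirical covariance satisfies the matrix ODE dP^{xx}/dt = −(P*)^{-1} P^{xx} − P^{xx} (P*)^{-1} + 2 I_n. -/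
/-!
Write `Yᵢ = Xᵢ - X̄` and `A = (Pˣˣ)⁻¹ - (P*)⁻¹`. The velocity field is
`A Yᵢ - (P*)⁻¹ (X̄ - x*)`; since the deviations sum to zero the mean moves with the
particle-independent part alone, so `dYᵢ/dt = A Yᵢ`. Differentiating
`Pˣˣ = M⁻¹ ∑ Yᵢ Yᵢᵀ` then gives `dPˣˣ/dt = A Pˣˣ + Pˣˣ Aᵀ`, and the symmetry of `Pˣˣ` and `P*`
turns this into `-(P*)⁻¹ Pˣˣ - Pˣˣ (P*)⁻¹ + 2 I`.
-/

open Matrix BigOperators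

attribute [local instance] Matrix.normedAddCommGroup Matrix.normedSpace

section EmpiricalMoments

variable {ι m E : Type*} [Fintype ι]

noncomputable def empiricalMean [AddCommGroup E] [Module ℝ E] (x : ι → E) : E :=
  (Fintype.card ι : ℝ)⁻¹ • ∑ i, x i

noncomputable def empiricalCovariance (x : ι → m → ℝ) : Matrix m m ℝ :=
  (Fintype.card ι : ℝ)⁻¹ • ∑ i, vecMulVec (x i - empiricalMean x) (x i - empiricalMean x)

theorem isSymm_empiricalCovariance (x : ι → m → ℝ) : (empiricalCovariance x).IsSymm := by
  simp only [IsSymm, empiricalCovariance, transpose_smul, transpose_sum, transpose_vecMulVec]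

variable [Nonempty ι] [AddCommGroup E] [Module ℝ E]

theorem card_smul_empiricalMean (x : ι → E) :
    (Fintype.card ι : ℝ) • empiricalMean x = ∑ i, x i := by
  rw [empiricalMean, smul_smul, mul_inv_cancel₀ (by positivity), one_smul]

theorem sum_sub_empiricalMean (x : ι → E) : ∑ i, (x i - empiricalMean x) = 0 := by
  rw [Finset.sum_sub_distrib, Finset.sum_const, Finset.card_univ,
    ← Nat.cast_smul_eq_nsmul ℝ, card_smul_empiricalMean, sub_self]

theorem empiricalMean_map_sub_empiricalMean_add {F : Type*} [AddCommGroup F] [Module ℝ F]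
    (f : E →ₗ[ℝ] F) (b : F) (x : ι → E) :
    empiricalMean (fun i => f (x i - empiricalMean x) + b) = b := by
  rw [empiricalMean, Finset.sum_add_distrib, ← map_sum, sum_sub_empiricalMean, map_zero,
    zero_add, Finset.sum_const, Finset.card_univ, ← Nat.cast_smul_eq_nsmul ℝ, smul_smul,
    inv_mul_cancel₀ (by positivity), one_smul]

end EmpiricalMoments

section Dynamics

variable {ι m E : Type*} [Fintype ι] [NormedAddCommGroup E] [NormedSpace ℝ E]
  {t : ℝ}

theorem HasDerivAt.vecMulVec {n : Type*} [Fintype n] {u : ℝ → m → ℝ} {v : ℝ → n → ℝ}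
    {u' : m → ℝ} {v' : n → ℝ} (hu : HasDerivAt u u' t) (hv : HasDerivAt v v' t) :
    HasDerivAt (fun s => vecMulVec (u s) (v s)) (vecMulVec u' (v t) + vecMulVec (u t) v') t := by
  refine hasDerivAt_pi.2 fun a => hasDerivAt_pi.2 fun b => ?_
  simpa only [vecMulVec_apply, Matrix.add_apply, Pi.add_apply, mul_comm (u' a)] using
    (hasDerivAt_pi.1 hu a).fun_mul (hasDerivAt_pi.1 hv b)

theorem hasDerivAt_empiricalMean {x : ℝ → ι → E} {x' : ι → E}
    (hx : ∀ i, HasDerivAt (fun s => x s i) (x' i) t) :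
    HasDerivAt (fun s => empiricalMean (x s)) (empiricalMean x') t :=
  (HasDerivAt.fun_sum (u := Finset.univ) fun i _ => hx i).const_smul _

variable [Nonempty ι]

theorem hasDerivAt_sub_empiricalMean {x : ℝ → ι → E} (A : E →ₗ[ℝ] E) (b : E)
    (hx : ∀ i, HasDerivAt (fun s => x s i) (A (x t i - empiricalMean (x t)) + b) t) (i : ι) :
    HasDerivAt (fun s => x s i - empiricalMean (x s)) (A (x t i - empiricalMean (x t))) t := by
  have hmean : HasDerivAt (fun s => empiricalMean (x s)) b t := by
    simpa only [empiricalMean_map_sub_empiricalMean_add] using hasDerivAt_empiricalMean hx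
  simpa only [add_sub_cancel_right] using (hx i).fun_sub hmean

theorem hasDerivAt_empiricalCovariance [Fintype m] {x : ℝ → ι → m → ℝ} (A : Matrix m m ℝ)
    (b : m → ℝ)
    (hx : ∀ i, HasDerivAt (fun s => x s i) (A *ᵥ (x t i - empiricalMean (x t)) + b) t) :
    HasDerivAt (fun s => empiricalCovariance (x s))
      (A * empiricalCovariance (x t) + empiricalCovariance (x t) * Aᵀ) t := by
  have hdev := hasDerivAt_sub_empiricalMean (mulVecLin A) b hx
  have hsum := (HasDerivAt.fun_sum (u := Finset.univ) fun i _ =>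
    (hdev i).vecMulVec (hdev i)).fun_const_smul (Fintype.card ι : ℝ)⁻¹
  refine hsum.congr_deriv ?_
  simp only [mulVecLin_apply, ← mul_vecMulVec]
  simp only [empiricalCovariance, ← vecMul_transpose, ← vecMulVec_mul, Finset.sum_add_distrib,
    ← Finset.mul_sum, ← Finset.sum_mul, smul_add, mul_smul_comm, smul_mul_assoc]

end Dynamics

theorem inv_sub_inv_mul_add_mul_transpose {n R : Type*} [Fintype n] [DecidableEq n] [CommRing R]
    {P Q : Matrix n n R} (hP : IsUnit P) (hPs : P.IsSymm) (hQs : Q.IsSymm) :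
    (P⁻¹ - Q⁻¹) * P + P * (P⁻¹ - Q⁻¹)ᵀ = -(Q⁻¹ * P) - P * Q⁻¹ + (2 : R) • 1 := by
  have hdet := (isUnit_iff_isUnit_det P).1 hP
  rw [transpose_sub, hPs.inv.eq, hQs.inv.eq, Matrix.sub_mul, Matrix.mul_sub,
    nonsing_inv_mul _ hdet, mul_nonsing_inv _ hdet, two_smul]
  abel

/-- Under the particle dynamics
`dXᵢ/dt = -(P*)⁻¹(Xᵢ - x*) + (Pˣˣ)⁻¹(Xᵢ - X̄)`, with `M ≥ n+1`, `P*` symmetric positive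
definite and the empirical covariance `Pˣˣ` invertible, the empirical covariance
satisfies `dPˣˣ/dt = -(P*)⁻¹ Pˣˣ - Pˣˣ (P*)⁻¹ + 2 Iₙ`. -/
theorem empirical_covariance_dynamics (n M : ℕ) (hM : n + 1 ≤ M)
    (Pstar : Matrix (Fin n) (Fin n) ℝ) (hPstar : Pstar.PosDef) (xstar : Fin n → ℝ)
    (X : ℝ → Fin M → (Fin n → ℝ))
    (Xbar : ℝ → (Fin n → ℝ)) (hXbar : ∀ t, Xbar t = (M : ℝ)⁻¹ • ∑ i, X t i)
    (Pxx : ℝ → Matrix (Fin n) (Fin n) ℝ)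
    (hPxx : ∀ t, Pxx t = (M : ℝ)⁻¹ • ∑ i, vecMulVec (X t i - Xbar t) (X t i - Xbar t))
    (hPxx_inv : ∀ t, IsUnit (Pxx t))
    (hODE : ∀ i t, HasDerivAt (fun s => X s i)
      (-(Pstar⁻¹ *ᵥ (X t i - xstar)) + (Pxx t)⁻¹ *ᵥ (X t i - Xbar t)) t) :
    ∀ t, HasDerivAt Pxx (-(Pstar⁻¹ * Pxx t) - Pxx t * Pstar⁻¹ + (2 : ℝ) • 1) t := by
  intro t
  have : Nonempty (Fin M) := ⟨⟨0, by omega⟩⟩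
  obtain rfl : Xbar = fun s => empiricalMean (X s) :=
    funext fun s => by rw [hXbar, empiricalMean, Fintype.card_fin]
  obtain rfl : Pxx = fun s => empiricalCovariance (X s) :=
    funext fun s => by rw [hPxx, empiricalCovariance, Fintype.card_fin]
  have hvel : ∀ i, HasDerivAt (fun s => X s i)
      (((empiricalCovariance (X t))⁻¹ - Pstar⁻¹) *ᵥ (X t i - empiricalMean (X t))
        + -(Pstar⁻¹ *ᵥ (empiricalMean (X t) - xstar))) t := fun i =>
    (hODE i t).congr_deriv (by simp only [sub_mulVec, mulVec_sub]; abel)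
  simpa only [inv_sub_inv_mul_add_mul_transpose (hPxx_inv t) (isSymm_empiricalCovariance _)
    (isHermitian_iff_isSymm.1 hPstar.1)] using hasDerivAt_empiricalCovariance _ _ hvel
end

section
/- Let P(t) be a solution of the matrix ODE dP/dt = −(P*)^{-1}P − P(P*)^{-1} + 2 I_n with P(0) symmetric positive definite and P* symmetric positive definite. Then P(t) → P* as t → ∞. -/
/-!
The deviation `D = P - P*` solves the homogeneous Lyapunov equation `D' = -(A D + D A)` with
`A = (P*)⁻¹` positive definite. Conjugating by an orthonormal eigenbasis of `A` decouples it into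
the scalar equations `E_ij' = -(a_i + a_j) E_ij` with eigenvalues `a_i > 0`, whose solutions
`E_ij(t) = e^{-(a_i + a_j) t} E_ij(0)` decay to `0`.
-/

open Matrix Filter Topology
open scoped ComplexOrder

attribute [local instance] Matrix.normedAddCommGroup Matrix.normedSpace

theorem tendsto_zero_of_hasDerivAt_eq_neg_smul {E : Type*} [NormedAddCommGroup E]
    [NormedSpace ℝ E] {c : ℝ} (hc : 0 < c) {f : ℝ → E} (hf : ∀ t, HasDerivAt f (-c • f t) t) :
    Tendsto f atTop (𝓝 0) := by
  have hderiv : ∀ s, HasDerivAt (fun s => Real.exp (c * s) • f s) 0 s := by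
    intro s
    have hexp : HasDerivAt (fun s => Real.exp (c * s)) (Real.exp (c * s) * c) s := by
      simpa using ((hasDerivAt_id s).const_mul c).exp
    convert hexp.fun_smul (hf s) using 1
    rw [smul_smul, ← add_smul, mul_neg, neg_add_cancel, zero_smul]
  have hconst : ∀ t, Real.exp (c * t) • f t = f 0 := fun t => by
    simpa using is_const_of_deriv_eq_zero (fun s => (hderiv s).differentiableAt)
      (fun s => (hderiv s).deriv) t 0
  have hdecay : Tendsto (fun t => Real.exp (-(c * t))) atTop (𝓝 0) :=
    Real.tendsto_exp_atBot.comp (tendsto_neg_atTop_atBot.comp (tendsto_id.const_mul_atTop hc))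
  have hsol : Tendsto (fun t => Real.exp (-(c * t)) • f 0) atTop (𝓝 0) := by
    simpa using hdecay.smul_const (f 0)
  refine hsol.congr fun t => ?_
  rw [← hconst t, smul_smul, ← Real.exp_add, neg_add_cancel, Real.exp_zero, one_smul]

theorem HasDerivAt.matrix_mul_mul {𝕜 α : Type*} [NontriviallyNormedField 𝕜] [CompleteSpace 𝕜]
    [NormedRing α] [NormedAlgebra 𝕜 α] [FiniteDimensional 𝕜 α]
    {l m n o : Type*} [Fintype l] [Fintype m] [Fintype n] [Fintype o]
    {f : 𝕜 → Matrix m n α} {f' : Matrix m n α} {t : 𝕜} (X : Matrix l m α)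
    (Y : Matrix n o α) (hf : HasDerivAt f f' t) :
    HasDerivAt (fun s => X * f s * Y) (X * f' * Y) t :=
  (LinearMap.toContinuousLinearMap
    (mulRightLinearMap l 𝕜 Y ∘ₗ mulLeftLinearMap n 𝕜 X)).hasFDerivAt.comp_hasDerivAt t hf

section Lyapunov

variable {𝕜 : Type*} [RCLike 𝕜] {m : Type*} [Fintype m] [DecidableEq m] {A : Matrix m m 𝕜}

-- Without the `Matrix m m 𝕜` ascriptions, `*` elaborates through the `CStarMatrix` instance.
theorem Matrix.IsHermitian.star_eigenvectorUnitary_mul (hA : A.IsHermitian) :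
    star (hA.eigenvectorUnitary : Matrix m m 𝕜) * A =
      (diagonal (RCLike.ofReal ∘ hA.eigenvalues) : Matrix m m 𝕜) *
        star (hA.eigenvectorUnitary : Matrix m m 𝕜) := by
  rw [← hA.conjStarAlgAut_star_eigenvectorUnitary]
  simp [mul_assoc]

theorem Matrix.IsHermitian.mul_eigenvectorUnitary (hA : A.IsHermitian) :
    A * (hA.eigenvectorUnitary : Matrix m m 𝕜) =
      (hA.eigenvectorUnitary : Matrix m m 𝕜) *
        (diagonal (RCLike.ofReal ∘ hA.eigenvalues) : Matrix m m 𝕜) := by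
  rw [← hA.conjStarAlgAut_star_eigenvectorUnitary]
  simp [← mul_assoc]

theorem tendsto_zero_of_hasDerivAt_eq_neg_mul_add_mul {n : Type*} [Fintype n] [DecidableEq n]
    {B : Matrix n n 𝕜} (hA : A.PosDef) (hB : B.PosDef) {D : ℝ → Matrix m n 𝕜}
    (hD : ∀ t, HasDerivAt D (-(A * D t + D t * B)) t) : Tendsto D atTop (𝓝 0) := by
  have hAU := hA.1.star_eigenvectorUnitary_mul
  have hBV := hB.1.mul_eigenvectorUnitary
  have ha := hA.eigenvalues_pos
  have hb := hB.eigenvalues_pos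
  have hU := mem_unitaryGroup_iff.mp hA.1.eigenvectorUnitary.2
  have hV := mem_unitaryGroup_iff.mp hB.1.eigenvectorUnitary.2
  generalize (hA.1.eigenvectorUnitary : Matrix m m 𝕜) = U, hA.1.eigenvalues = a at *
  generalize (hB.1.eigenvectorUnitary : Matrix n n 𝕜) = V, hB.1.eigenvalues = b at *
  set E : ℝ → Matrix m n 𝕜 := fun t => star U * D t * V
  have hE : ∀ t, HasDerivAt E (-((diagonal (RCLike.ofReal ∘ a) : Matrix m m 𝕜) * E t +
      E t * (diagonal (RCLike.ofReal ∘ b) : Matrix n n 𝕜))) t := by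
    intro t
    convert (hD t).matrix_mul_mul (star U) V using 1
    simp only [E, Matrix.mul_neg, Matrix.neg_mul, Matrix.mul_add, Matrix.add_mul,
      ← Matrix.mul_assoc, hAU]
    simp only [Matrix.mul_assoc, hBV]
  have hE_entry : ∀ i j, Tendsto (fun t => E t i j) atTop (𝓝 0) := by
    intro i j
    refine tendsto_zero_of_hasDerivAt_eq_neg_smul (add_pos (ha i) (hb j)) fun t => ?_
    convert hasDerivAt_pi.1 (hasDerivAt_pi.1 (hE t) i) j using 1
    simp only [Matrix.neg_apply, Matrix.add_apply, diagonal_mul, mul_diagonal,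
      Function.comp_apply, RCLike.real_smul_eq_coe_mul]
    push_cast; ring
  have hE_tendsto : Tendsto E atTop (𝓝 0) :=
    tendsto_pi_nhds.2 fun i => tendsto_pi_nhds.2 fun j => hE_entry i j
  have hcont : Continuous fun X : Matrix m n 𝕜 => U * X * star V :=
    (continuous_const.matrix_mul continuous_id).matrix_mul continuous_const
  have hDE : ∀ t, D t = U * E t * star V := by
    intro t
    simp only [E, ← Matrix.mul_assoc, hU, Matrix.one_mul]
    simp only [Matrix.mul_assoc, hV, Matrix.mul_one]
  have hlim := (hcont.tendsto 0).comp hE_tendsto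
  rw [Matrix.mul_zero, Matrix.zero_mul] at hlim
  exact hlim.congr fun t => (hDE t).symm

end Lyapunov

theorem covariance_ODE_convergence_general (n : ℕ)
    (Pstar : Matrix (Fin n) (Fin n) ℝ) (hPstar : Pstar.PosDef)
    (P : ℝ → Matrix (Fin n) (Fin n) ℝ)
    (hODE : ∀ t, HasDerivAt P (-(Pstar⁻¹ * P t) - P t * Pstar⁻¹ + (2 : ℝ) • 1) t) :
    Tendsto P atTop (nhds Pstar) := by
  have hdet : IsUnit Pstar.det := (isUnit_iff_isUnit_det Pstar).mp hPstar.isUnit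
  have hdev : ∀ t, HasDerivAt (fun t => P t - Pstar)
      (-(Pstar⁻¹ * (P t - Pstar) + (P t - Pstar) * Pstar⁻¹)) t := by
    refine fun t => ((hODE t).sub_const Pstar).congr_deriv ?_
    rw [Matrix.mul_sub, Matrix.sub_mul, nonsing_inv_mul _ hdet, mul_nonsing_inv _ hdet, two_smul]
    abel
  simpa using
    (tendsto_zero_of_hasDerivAt_eq_neg_mul_add_mul hPstar.inv hPstar.inv hdev).add_const Pstar

/-- Any solution of the matrix ODE
`dP/dt = -(P*)⁻¹ P - P (P*)⁻¹ + 2 Iₙ` with `P(0)` and `P*` symmetric positive definite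
converges to `P*` as `t → ∞`. -/
theorem covariance_ODE_convergence (n : ℕ)
    (Pstar : Matrix (Fin n) (Fin n) ℝ) (hPstar : Pstar.PosDef)
    (P : ℝ → Matrix (Fin n) (Fin n) ℝ) (hP0 : (P 0).PosDef)
    (hODE : ∀ t, HasDerivAt P (-(Pstar⁻¹ * P t) - P t * Pstar⁻¹ + (2 : ℝ) • 1) t) :
    Tendsto P atTop (nhds Pstar) :=
  covariance_ODE_convergence_general n Pstar hPstar P hODE
end

section
/- Viewing the empirical covariance P^{xx} as a function of the particle positions, its divergence with respect to the i-th particle satisfies ∇_{x^{(i)}} · P^{xx} = ((n+1)/M)(x^{(i)} − x̄), where the divergence of a matrix field is taken row-wise: (∇_x · P)_k = ∑_l ∂P_{kl}/∂x_l. -/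
/-!
Moving the coordinate `x⁽ⁱ⁾ₗ` by `t` moves each centred particle `x⁽ʲ⁾ - x̄` by `t (δᵢⱼ - 1/M) eₗ`, so
`Pₖₗ` is a quadratic polynomial in `t`. Its linear coefficient is
`(1/M) ∑ⱼ (δᵢⱼ - 1/M) (δₖₗ (x⁽ʲ⁾ - x̄)ₗ + (x⁽ʲ⁾ - x̄)ₖ)`, and since the centred particles sum to zero
the `1/M` terms vanish, leaving `∂Pₖₗ/∂x⁽ⁱ⁾ₗ = (1/M)(δₖₗ + 1)(x⁽ⁱ⁾ - x̄)ₖ`.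
Summing over `l` gives the factor `(n + 1)/M`.
-/

open Matrix BigOperators

noncomputable def empCov {n M : ℕ} (xs : Fin M → (Fin n → ℝ)) :
    Matrix (Fin n) (Fin n) ℝ :=
  (M : ℝ)⁻¹ • ∑ j, Matrix.vecMulVec (xs j - (M : ℝ)⁻¹ • ∑ i, xs i)
    (xs j - (M : ℝ)⁻¹ • ∑ i, xs i)

section

variable {n M : ℕ}

noncomputable def empMean (xs : Fin M → Fin n → ℝ) : Fin n → ℝ := (M : ℝ)⁻¹ • ∑ j, xs j

theorem empCov_apply (xs : Fin M → Fin n → ℝ) (k l : Fin n) :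
    empCov xs k l = (M : ℝ)⁻¹ * ∑ j, (xs j - empMean xs) k * (xs j - empMean xs) l := by
  simp [empCov, empMean, vecMulVec_apply, Matrix.sum_apply]

theorem sum_sub_empMean (xs : Fin M → Fin n → ℝ) : ∑ j, (xs j - empMean xs) = 0 := by
  rcases Nat.eq_zero_or_pos M with rfl | hM
  · simp
  · rw [Finset.sum_sub_distrib, Finset.sum_const, Finset.card_univ, Fintype.card_fin, empMean,
      ← Nat.cast_smul_eq_nsmul ℝ, smul_smul, mul_inv_cancel₀ (by positivity), one_smul, sub_self]

theorem empMean_add_smul (xs ws : Fin M → Fin n → ℝ) (t : ℝ) :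
    empMean (xs + t • ws) = empMean xs + t • empMean ws := by
  simp only [empMean, Finset.sum_add_distrib, Pi.add_apply, Pi.smul_apply, ← Finset.smul_sum,
    smul_add, smul_comm t]

theorem sum_sub_empMean_apply (xs : Fin M → Fin n → ℝ) (l : Fin n) :
    ∑ j, (xs j - empMean xs) l = 0 := by
  rw [← Finset.sum_apply, sum_sub_empMean, Pi.zero_apply]

-- The centering of the direction `ws` drops out because the centered particles sum to zero.
theorem hasDerivAt_empCov_apply_add_smul (xs ws : Fin M → Fin n → ℝ) (k l : Fin n) :
    HasDerivAt (fun t : ℝ => empCov (xs + t • ws) k l)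
      ((M : ℝ)⁻¹ * ∑ j, (ws j k * (xs j - empMean xs) l + (xs j - empMean xs) k * ws j l)) 0 := by
  have hline : (fun t : ℝ => empCov (xs + t • ws) k l) = fun t => (M : ℝ)⁻¹ * ∑ j,
      ((xs j - empMean xs) k + t * (ws j - empMean ws) k) *
        ((xs j - empMean xs) l + t * (ws j - empMean ws) l) := by
    ext t
    simp only [empCov_apply, empMean_add_smul, Pi.add_apply, Pi.smul_apply, Pi.sub_apply,
      smul_eq_mul]
    congr 1; refine Finset.sum_congr rfl fun j _ => ?_; ring
  have hterm : ∀ (a b : ℝ), HasDerivAt (fun t : ℝ => a + t * b) b 0 := fun a b => by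
    simpa using ((hasDerivAt_id (0 : ℝ)).mul_const b).const_add a
  rw [hline]
  refine ((HasDerivAt.fun_sum fun j (_ : j ∈ Finset.univ) =>
    (hterm _ _).fun_mul (hterm _ _)).const_mul (M : ℝ)⁻¹).congr_deriv ?_
  have hcenter : ∀ j, (ws j - empMean ws) k * (xs j - empMean xs) l
        + (xs j - empMean xs) k * (ws j - empMean ws) l
      = ws j k * (xs j - empMean xs) l + (xs j - empMean xs) k * ws j l
        - (empMean ws k * (xs j - empMean xs) l + (xs j - empMean xs) k * empMean ws l) := by
    intro j
    simp only [Pi.sub_apply]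
    ring
  simp only [zero_mul, add_zero, hcenter, Finset.sum_sub_distrib, Finset.sum_add_distrib,
    ← Finset.mul_sum, ← Finset.sum_mul, sum_sub_empMean_apply, mul_zero, zero_mul, sub_zero]

theorem update_update_eq_add_smul_single {ι κ R : Type*} [DecidableEq ι] [DecidableEq κ] [Ring R]
    (f : ι → κ → R) (i : ι) (l : κ) (s : R) :
    Function.update f i (Function.update (f i) l s)
      = f + (s - f i l) • (Pi.single i (Pi.single l 1) : ι → κ → R) := by
  ext j m
  rcases eq_or_ne j i with rfl | hj
  · rcases eq_or_ne m l with rfl | hm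
    · simp
    · simp [hm]
  · simp [hj]

theorem hasDerivAt_empCov_update_apply (xs : Fin M → Fin n → ℝ) (i : Fin M) (k l : Fin n) :
    HasDerivAt (fun s : ℝ => empCov (Function.update xs i (Function.update (xs i) l s)) k l)
      ((M : ℝ)⁻¹ * ((if l = k then 1 else 0) + 1) * (xs i - empMean xs) k) (xs i l) := by
  have hline := HasDerivAt.comp_sub_const (xs i l) (xs i l) (by
    rw [sub_self]; exact hasDerivAt_empCov_apply_add_smul xs (Pi.single i (Pi.single l 1)) k l)
  simp only [update_update_eq_add_smul_single]
  refine hline.congr_deriv ?_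
  simp only [Pi.single_apply i, ite_apply, Pi.zero_apply, ite_mul, mul_ite, zero_mul, mul_zero,
    Finset.sum_add_distrib, Finset.sum_ite_eq', Finset.mem_univ, if_true, Pi.single_eq_same,
    mul_one]
  rcases eq_or_ne l k with rfl | hlk
  · simp only [Pi.single_eq_same, if_true]
    ring
  · simp only [Pi.single_eq_of_ne' hlk, hlk, if_false]
    ring

end

/-- Viewing the empirical covariance `Pˣˣ` as a function of the particle
positions, its row-wise divergence with respect to the `i`-th particle satisfies
`∇_{xᵢ} · Pˣˣ = ((n+1)/M)(xᵢ - x̄)`, i.e. for each row `k`,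
`∑ₗ ∂(Pˣˣ)ₖₗ/∂xᵢₗ = ((n+1)/M)(xᵢ - x̄)ₖ`. -/
theorem divergence_empCov (n M : ℕ) (x : Fin M → (Fin n → ℝ)) (i : Fin M) :
    ∀ k : Fin n,
      ∑ l : Fin n,
        deriv (fun s : ℝ =>
          empCov (Function.update x i (Function.update (x i) l s)) k l) (x i l)
      = ((n : ℝ) + 1) / (M : ℝ) * (x i k - ((M : ℝ)⁻¹ • ∑ j, x j) k) := by
  intro k
  simp only [fun l => (hasDerivAt_empCov_update_apply x i k l).deriv]
  rw [← Finset.sum_mul, ← Finset.mul_sum, Finset.sum_add_distrib, Finset.sum_ite_eq',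
    Finset.sum_const, Finset.card_univ, Fintype.card_fin]
  simp only [Finset.mem_univ, if_true, nsmul_eq_mul, mul_one, Pi.sub_apply, empMean]
  ring
end
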